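/- Let L > 0, let s0 be a positive integer, let ρ > 0, and let w : [−ρ/2, ρ/2] → ℝ be a non-negative absolutely continuous function with weak derivative w' ∈ L¹(−ρ/2, ρ/2). Suppose w(0) > 2L and w(x̄) < L·2^{−s0} for some x̄ ∈ [−ρ/2, ρ/2]. Then (s0 − 1)·ln 2 ≤ ∫_{{x ∈ (−ρ/2, ρ/2) : w(x) < L(1 − 2^{−s0})}} |w'(x)| / (w(x) + L·2^{−s0}) dx. -/

import Mathlib

/-!
Put `δ = L / 2 ^ s0`, `c = L - δ` and `F = log (min w c + δ)`. Since `t ↦ log (min t c + δ)` is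
`δ⁻¹`-Lipschitz on `[0, ∞)`, `F` is absolutely continuous, so `F 0 - F x̄` is the integral of `F'`.
Where `w < c`, `F' = w' / (w + δ)`; elsewhere `F` attains its maximum `log L`, so `F' = 0`.
Finally `F 0 = log L` and `F x̄ < log (2 δ) = log L - (s0 - 1) log 2`.
-/

open MeasureTheory Set Real

theorem AbsolutelyContinuousOnInterval.of_dist_le_mul {f g : ℝ → ℝ} {a b : ℝ}
    (hf : AbsolutelyContinuousOnInterval f a b) (K : ℝ)
    (h : ∀ x ∈ uIcc a b, ∀ y ∈ uIcc a b, dist (g x) (g y) ≤ K * dist (f x) (f y)) :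
    AbsolutelyContinuousOnInterval g a b := by
  refine squeeze_zero' (Filter.Eventually.of_forall fun E ↦
    Finset.sum_nonneg fun i _ ↦ dist_nonneg) ?_ (by simpa using Filter.Tendsto.const_mul K hf)
  filter_upwards [Filter.mem_inf_of_right (Filter.mem_principal_self _)] with E hE
  rw [Finset.mul_sum]
  exact Finset.sum_le_sum fun i hi ↦ h _ (hE.1 i hi).1 _ (hE.1 i hi).2

theorem absolutelyContinuousOnInterval_of_eq_add_integral {f f' : ℝ → ℝ} {a b : ℝ}
    (hf' : IntervalIntegrable f' volume a b)
    (hf : ∀ x ∈ uIcc a b, f x = f a + ∫ t in a..x, f' t) :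
    AbsolutelyContinuousOnInterval f a b :=
  (hf'.absolutelyContinuousOnInterval_intervalIntegral left_mem_uIcc).of_dist_le_mul 1
    fun x hx y hy ↦ by rw [hf x hx, hf y hy, dist_add_left, one_mul]

theorem ae_hasDerivAt_of_eq_add_integral {f f' : ℝ → ℝ} {a b : ℝ}
    (hf' : IntervalIntegrable f' volume a b)
    (hf : ∀ x ∈ uIcc a b, f x = f a + ∫ t in a..x, f' t) :
    ∀ᵐ x, x ∈ Ioo a b → HasDerivAt f (f' x) x := by
  filter_upwards [hf'.ae_hasDerivAt_integral] with x hx hxab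
  have hIcc : Icc a b ⊆ uIcc a b := Icc_subset_uIcc
  refine ((hx (hIcc (Ioo_subset_Icc_self hxab)) a left_mem_uIcc).const_add (f a))
    |>.congr_of_eventuallyEq ?_
  filter_upwards [Icc_mem_nhds hxab.1 hxab.2] with t ht using hf t (hIcc ht)

theorem dist_log_min_add_le {c δ u v : ℝ} (hc : 0 ≤ c) (hδ : 0 < δ) (hu : 0 ≤ u) (hv : 0 ≤ v) :
    dist (log (min u c + δ)) (log (min v c + δ)) ≤ δ⁻¹ * dist u v := by
  have hlog : ∀ p ∈ Ici δ, ∀ q ∈ Ici δ, ‖log p - log q‖ ≤ δ⁻¹ * ‖p - q‖ := by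
    intro p hp q hq
    refine (convex_Ici δ).norm_image_sub_le_of_norm_hasDerivWithin_le
      (fun t ht ↦ (hasDerivAt_log (hδ.trans_le ht).ne').hasDerivWithinAt) (fun t ht ↦ ?_) hq hp
    rw [norm_inv, norm_of_nonneg (hδ.trans_le ht).le]
    exact inv_anti₀ hδ ht
  calc dist (log (min u c + δ)) (log (min v c + δ))
      ≤ δ⁻¹ * |min u c - min v c| := by
        simpa [dist_eq] using hlog _ (le_add_of_nonneg_left (le_min hu hc))
          _ (le_add_of_nonneg_left (le_min hv hc))
    _ ≤ δ⁻¹ * dist u v := by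
        gcongr
        simpa [Real.dist_eq] using abs_min_sub_min_le_max u c v c

theorem abs_deriv_log_min_add_le_indicator {w w' : ℝ → ℝ} {c δ x : ℝ} (hcδ : 0 < c + δ)
    (hx : 0 < w x + δ) (hw : HasDerivAt w (w' x) x) :
    |deriv (fun y ↦ log (min (w y) c + δ)) x| ≤
      {y | w y < c}.indicator (fun y ↦ |w' y| / (w y + δ)) x := by
  by_cases hxc : w x < c
  · have hloc : (fun y ↦ log (min (w y) c + δ)) =ᶠ[nhds x] fun y ↦ log (w y + δ) := by
      filter_upwards [hw.continuousAt.eventually_lt continuousAt_const hxc] with y hy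
      rw [min_eq_left hy.le]
    rw [hloc.deriv_eq, ((hw.add_const δ).log hx.ne').deriv, indicator_of_mem (by exact hxc),
      abs_div, abs_of_pos hx]
  · have hmax : IsLocalMax (fun y ↦ log (min (w y) c + δ)) x := by
      filter_upwards [continuousAt_const.eventually_lt hw.continuousAt (by linarith : -δ < w x)]
        with y hy
      rw [min_eq_right (not_lt.1 hxc)]
      have : -δ < min (w y) c := lt_min hy (by linarith)
      exact log_le_log (by linarith) (by gcongr; exact min_le_right _ _)
    rw [hmax.deriv_eq_zero, abs_zero, indicator_of_notMem (by exact hxc)]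

theorem abs_log_min_add_sub_le_setIntegral {w w' : ℝ → ℝ} {a b c δ x y : ℝ} (hc : 0 ≤ c)
    (hδ : 0 < δ) (hw_nonneg : ∀ t ∈ Icc a b, 0 ≤ w t) (hw' : IntegrableOn w' (Icc a b))
    (hw : ∀ t ∈ Icc a b, w t = w a + ∫ s in a..t, w' s) (hx : x ∈ Icc a b) (hy : y ∈ Icc a b) :
    |log (min (w y) c + δ) - log (min (w x) c + δ)| ≤
      ∫ t in {t ∈ Ioo a b | w t < c}, |w' t| / (w t + δ) := by
  set S := {t ∈ Ioo a b | w t < c}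
  set g := fun t ↦ |w' t| / (w t + δ)
  have hab : uIcc a b = Icc a b := uIcc_of_le (hx.1.trans hx.2)
  rw [← hab] at hw hw_nonneg hw' hx hy
  have hw'_ii : IntervalIntegrable w' volume a b := hw'.intervalIntegrable
  have hw_ac := absolutelyContinuousOnInterval_of_eq_add_integral hw'_ii hw
  have hF_ac : AbsolutelyContinuousOnInterval (fun t ↦ log (min (w t) c + δ)) x y :=
    (hw_ac.of_dist_le_mul δ⁻¹ fun s hs t ht ↦
      dist_log_min_add_le hc hδ (hw_nonneg s hs) (hw_nonneg t ht)).mono (uIcc_subset_uIcc hx hy)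
  have hS : MeasurableSet S :=
    (hw_ac.continuousOn.mono (Ioo_subset_Icc_self.trans Icc_subset_uIcc)).isOpen_inter_preimage
      isOpen_Ioo isOpen_Iio |>.measurableSet
  have hSab : S ⊆ uIcc a b := fun t ht ↦ hab ▸ Ioo_subset_Icc_self ht.1
  have hg_nonneg : 0 ≤ S.indicator g := indicator_nonneg fun t ht ↦
    div_nonneg (abs_nonneg _) (by linarith [hw_nonneg t (hSab ht)])
  have hg_int : IntegrableOn g S := by
    refine ((hw'.mono_set hSab).abs.div_const δ).mono' ?_ ?_
    · have hw_meas : AEMeasurable (fun t ↦ w t + δ) (volume.restrict S) :=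
        ((hw_ac.continuousOn.mono hSab).add continuousOn_const).aestronglyMeasurable hS
          |>.aemeasurable
      exact ((hw'.mono_set hSab).aestronglyMeasurable.aemeasurable.abs.div
        hw_meas).aestronglyMeasurable
    · refine ae_restrict_of_forall_mem hS fun t ht ↦ ?_
      have := hw_nonneg t (hSab ht)
      rw [Real.norm_of_nonneg (div_nonneg (abs_nonneg _) (by linarith))]
      exact div_le_div_of_nonneg_left (abs_nonneg _) hδ (by linarith)
  have hderiv : ∀ᵐ t, t ∈ uIoc x y →
      |deriv (fun t ↦ log (min (w t) c + δ)) t| ≤ S.indicator g t := by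
    filter_upwards [ae_hasDerivAt_of_eq_add_integral hw'_ii hw, Measure.ae_ne volume a,
      Measure.ae_ne volume b] with t hw_deriv hta htb ht
    have htab : t ∈ Icc a b := hab ▸ uIcc_subset_uIcc hx hy (uIoc_subset_uIcc ht)
    have htab' : t ∈ Ioo a b := ⟨lt_of_le_of_ne htab.1 hta.symm, lt_of_le_of_ne htab.2 htb⟩
    have := hw_nonneg t (hab ▸ htab)
    convert abs_deriv_log_min_add_le_indicator (c := c) (δ := δ) (by linarith) (by linarith)
      (hw_deriv htab') using 1
    simp [S, g, indicator, htab'.1, htab'.2]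
  calc |log (min (w y) c + δ) - log (min (w x) c + δ)|
      = ‖∫ t in x..y, deriv (fun t ↦ log (min (w t) c + δ)) t‖ := by
        rw [hF_ac.integral_deriv_eq_sub, Real.norm_eq_abs]
    _ ≤ ∫ t in uIoc x y, ‖deriv (fun t ↦ log (min (w t) c + δ)) t‖ :=
        intervalIntegral.norm_integral_le_integral_norm_uIoc
    _ ≤ ∫ t in uIoc x y, S.indicator g t :=
        integral_mono_of_nonneg (Filter.Eventually.of_forall fun t ↦ norm_nonneg _)
          (hg_int.integrable_indicator hS).integrableOn
          ((ae_restrict_iff' measurableSet_uIoc).2 hderiv)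
    _ ≤ ∫ t, S.indicator g t :=
        setIntegral_le_integral (hg_int.integrable_indicator hS)
          (Filter.Eventually.of_forall hg_nonneg)
    _ = ∫ t in S, g t := integral_indicator hS

theorem log_estimate_general (L : ℝ) (hL : 0 < L) (s0 : ℕ)
    (ρ : ℝ) (w w' : ℝ → ℝ)
    (hw_nonneg : ∀ x ∈ Icc (-(ρ/2)) (ρ/2), 0 ≤ w x)
    (hw'_int : IntegrableOn w' (Icc (-(ρ/2)) (ρ/2)) volume)
    (hw_ac : ∀ a ∈ Icc (-(ρ/2)) (ρ/2), ∀ b ∈ Icc (-(ρ/2)) (ρ/2), a ≤ b →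
        w b - w a = ∫ x in a..b, w' x)
    (h0 : 2 * L < w 0)
    (xbar : ℝ) (hxbar : xbar ∈ Icc (-(ρ/2)) (ρ/2)) (hxw : w xbar < L / 2 ^ s0) :
    ((s0 : ℝ) - 1) * Real.log 2 ≤
      ∫ x in {x ∈ Ioo (-(ρ/2)) (ρ/2) | w x < L * (1 - 1 / 2 ^ s0)},
        |w' x| / (w x + L / 2 ^ s0) := by
  set δ := L / 2 ^ s0
  set c := L * (1 - 1 / 2 ^ s0)
  have hδ : 0 < δ := by positivity
  have hc : 0 ≤ c :=
    mul_nonneg hL.le (sub_nonneg.2 (div_le_one_of_le₀ (one_le_pow₀ one_le_two) (by positivity)))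
  have hcδ : c + δ = L := by ring
  have hρ : -(ρ/2) ≤ ρ/2 := hxbar.1.trans hxbar.2
  have hrep : ∀ t ∈ Icc (-(ρ/2)) (ρ/2), w t = w (-(ρ/2)) + ∫ s in -(ρ/2)..t, w' s :=
    fun t ht ↦ by linarith [hw_ac _ (left_mem_Icc.2 hρ) t ht ht.1]
  have hF_bound := abs_log_min_add_sub_le_setIntegral hc hδ hw_nonneg hw'_int hrep hxbar
    (⟨by linarith, by linarith⟩ : (0 : ℝ) ∈ Icc (-(ρ/2)) (ρ/2))
  rw [min_eq_right (by linarith), hcδ] at hF_bound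
  have h_xbar : log (min (w xbar) c + δ) < log (2 * δ) := by
    have := hw_nonneg xbar hxbar
    exact log_lt_log (by positivity) (by linarith [min_le_left (w xbar) c])
  have h_two_pow : log L - log (2 * δ) = ((s0 : ℝ) - 1) * log 2 := by
    rw [log_mul two_ne_zero hδ.ne', log_div hL.ne' (by positivity), log_pow]
    ring
  linarith [le_abs_self (log L - log (min (w xbar) c + δ))]

/-- the one-dimensional logarithmic estimate at the core of the decay
lemma. Here `w` is non-negative and absolutely continuous on `[-ρ/2, ρ/2]` with weak
derivative `w' ∈ L¹`, `w(0) > 2L` and `w(x̄) < L/2^{s₀}`. -/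
theorem log_estimate (L : ℝ) (hL : 0 < L) (s0 : ℕ) (hs0 : 0 < s0)
    (ρ : ℝ) (hρ : 0 < ρ) (w w' : ℝ → ℝ)
    (hw_nonneg : ∀ x ∈ Icc (-(ρ/2)) (ρ/2), 0 ≤ w x)
    (hw'_int : IntegrableOn w' (Icc (-(ρ/2)) (ρ/2)) volume)
    (hw_ac : ∀ a ∈ Icc (-(ρ/2)) (ρ/2), ∀ b ∈ Icc (-(ρ/2)) (ρ/2), a ≤ b →
        w b - w a = ∫ x in a..b, w' x)
    (h0 : 2 * L < w 0)
    (xbar : ℝ) (hxbar : xbar ∈ Icc (-(ρ/2)) (ρ/2)) (hxw : w xbar < L / 2 ^ s0) :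
    ((s0 : ℝ) - 1) * Real.log 2 ≤
      ∫ x in {x ∈ Ioo (-(ρ/2)) (ρ/2) | w x < L * (1 - 1 / 2 ^ s0)},
        |w' x| / (w x + L / 2 ^ s0) :=
  log_estimate_general L hL s0 ρ w w' hw_nonneg hw'_int hw_ac h0 xbar hxbar hxw
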